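/- arXiv:math/0511032 — 7 statements merged into one kernel-verified Lean document; each statement's English description precedes it below -/
import Mathlib

section
/- Every finite atomic lattice is isomorphic to the lcm-lattice of some squarefree monomial ideal. -/
/-- The lcm-lattice of the squarefree monomial ideal with minimal generators
`g 0, …, g (r-1)` (a squarefree monomial is identified with its support, a
`Finset`; lcm = union, divisibility = inclusion).  Its elements are all
least common multiples (unions) of subsets of the generators, with the empty
lcm `1 = ∅` as bottom, ordered by divisibility (inclusion). -/
def lcmLat {n r : ℕ} (g : Fin r → Finset (Fin n)) : Set (Finset (Fin n)) :=
  {S | ∃ T : Finset (Fin r), S = T.sup g}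

/-- Every finite atomic lattice is isomorphic to the lcm-lattice of some
squarefree monomial ideal (with minimal generators, none equal to `1`). -/
theorem stmt3 {L : Type*} [CompleteLattice L] [Fintype L] [IsAtomistic L] :
    ∃ (n r : ℕ) (g : Fin r → Finset (Fin n)),
      (∀ j, g j ≠ ∅) ∧
      (∀ j j', g j ⊆ g j' → j = j') ∧
      Nonempty (L ≃o ↥(lcmLat g)) := by
  classical
  set n := Fintype.card L with hn
  set r := Fintype.card {a : L // IsAtom a} with hr
  let e : Fin n ≃ L := (Fintype.equivFin L).symm
  let ea : Fin r ≃ {a : L // IsAtom a} := (Fintype.equivFin {a : L // IsAtom a}).symm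
  let φ : L → Finset (Fin n) := fun x => Finset.univ.filter (fun i => ¬ x ≤ e i)
  have hmem : ∀ (x : L) (i : Fin n), i ∈ φ x ↔ ¬ x ≤ e i := by
    intro x i; simp [φ]
  have hmono : ∀ x y : L, φ x ⊆ φ y ↔ x ≤ y := by
    intro x y
    constructor
    · intro h
      by_contra hxy
      have h1 : e.symm y ∈ φ x := (hmem _ _).2 (by simpa using hxy)
      have h2 := h h1
      rw [hmem] at h2
      exact h2 (by simp)
    · intro hxy i hi
      rw [hmem] at hi ⊢
      exact fun h => hi (hxy.trans h)
  have hsup : ∀ x y : L, φ (x ⊔ y) = φ x ⊔ φ y := by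
    intro x y
    ext i
    simp only [Finset.sup_eq_union, Finset.mem_union, hmem, sup_le_iff, not_and_or]
  have hbot : φ ⊥ = ⊥ := by
    ext i; simp [hmem]
  let f : Fin r → L := fun j => (ea j : L)
  have key : ∀ T : Finset (Fin r), T.sup (φ ∘ f) = φ (T.sup f) :=
    fun T => (Finset.comp_sup_eq_sup_comp φ hsup hbot).symm
  have surj : ∀ x : L, φ x ∈ lcmLat (φ ∘ f) := by
    intro x
    refine ⟨Finset.univ.filter (fun j => f j ≤ x), ?_⟩
    rw [key]
    congr 1
    apply le_antisymm
    · conv_lhs => rw [← sSup_atoms_le_eq x]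
      apply sSup_le
      rintro a ⟨ha, hax⟩
      have hfa : f (ea.symm ⟨a, ha⟩) = a := by simp [f]
      calc a = f (ea.symm ⟨a, ha⟩) := hfa.symm
        _ ≤ _ := Finset.le_sup (Finset.mem_filter.mpr ⟨Finset.mem_univ _, by rw [hfa]; exact hax⟩)
    · exact Finset.sup_le (fun j hj => (Finset.mem_filter.mp hj).2)
  refine ⟨n, r, φ ∘ f, ?_, ?_, ?_⟩
  · intro j h
    have hle : φ (f j) ⊆ φ ⊥ := by
      rw [hbot]
      simp only [Function.comp] at h
      rw [h]
      rfl
    have : f j ≤ ⊥ := (hmono _ _).1 hle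
    exact (ea j).2.1 (le_bot_iff.mp this)
  · intro j j' hsub
    have h1 : f j ≤ f j' := (hmono _ _).1 hsub
    have h2 : f j = f j' := ((ea j').2.le_iff.mp h1).resolve_left (ea j).2.1
    have : ea j = ea j' := Subtype.ext h2
    exact ea.injective this
  · let F : L → ↥(lcmLat (φ ∘ f)) := fun x => ⟨φ x, surj x⟩
    have hinj : Function.Injective F := by
      intro x y hxy
      have h := congrArg Subtype.val hxy
      exact le_antisymm ((hmono _ _).1 h.le) ((hmono _ _).1 h.ge)
    have hsurj : Function.Surjective F := by
      rintro ⟨S, T, hS⟩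
      exact ⟨T.sup f, Subtype.ext (by simp only [F]; rw [hS, key])⟩
    refine ⟨⟨Equiv.ofBijective F ⟨hinj, hsurj⟩, ?_⟩⟩
    intro a b
    show F a ≤ F b ↔ a ≤ b
    rw [← hmono a b]
    exact Iff.rfl
end

section
/- Let I be a squarefree monomial ideal in k[y₁,…,y_n] with lcm-lattice isomorphic to the finite atomic lattice L̂. Then n ≥ #mi(L), where mi(L) is the set of meet-irreducible elements of L̂ − {0̂,1̂}. -/
/-!
Sending each element of `L` to the support of its lcm gives an injective map
`F : L → Finset (Fin n)` preserving joins and `⊥`. A meet-irreducible `k` has a unique upper cover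
`c`, and some variable `i ∈ F c \ F k` separates the pair. Then `k` is the join of all `x` with
`i ∉ F x`: that join still avoids `i`, and were it strictly above `k` it would lie above `c`.
Hence `i ↦ sSup {x | i ∉ F x}` maps the variables onto a set containing every meet-irreducible
element.
-/

/-- Meet-irreducible proper elements of a bounded lattice. -/
def MeetIrred (L : Type*) [Lattice L] [BoundedOrder L] : Set L :=
  {l | l ≠ ⊥ ∧ l ≠ ⊤ ∧ ∀ a b : L, l = a ⊓ b → l = a ∨ l = b}

theorem meetIrred_subset_setOf_infIrred {L : Type*} [Lattice L] [BoundedOrder L] :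
    MeetIrred L ⊆ {k | InfIrred k} := by
  rintro k ⟨-, hk_top, hk⟩
  refine ⟨fun h => hk_top h.eq_top, fun a b hab => ?_⟩
  rcases hk a b hab.symm with h | h
  exacts [Or.inl h.symm, Or.inr h.symm]

theorem supClosed_lcmLat {n r : ℕ} (g : Fin r → Finset (Fin n)) : SupClosed (lcmLat g) := by
  rintro _ ⟨T, rfl⟩ _ ⟨T', rfl⟩
  exact ⟨T ∪ T', Finset.sup_union.symm⟩

theorem bot_mem_lcmLat {n r : ℕ} (g : Fin r → Finset (Fin n)) : (⊥ : Finset (Fin n)) ∈ lcmLat g :=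
  ⟨∅, Finset.sup_empty.symm⟩

namespace OrderIso

variable {L β : Type*} [Lattice L] [Lattice β] {S : Set β}

theorem val_map_sup_of_supClosed (e : L ≃o S) (hS : SupClosed S) (x y : L) :
    (e (x ⊔ y) : β) = (e x : β) ⊔ (e y : β) := by
  refine le_antisymm ?_ (sup_le (e.monotone le_sup_left) (e.monotone le_sup_right))
  have hxy : x ⊔ y ≤ e.symm ⟨e x ⊔ e y, hS (e x).2 (e y).2⟩ :=
    sup_le (e.le_symm_apply.mpr le_sup_left) (e.le_symm_apply.mpr le_sup_right)
  exact e.le_symm_apply.mp hxy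

theorem val_map_bot_of_bot_mem [OrderBot L] [OrderBot β] (e : L ≃o S) (hS : ⊥ ∈ S) :
    (e ⊥ : β) = ⊥ :=
  le_bot_iff.mp (e.le_symm_apply.mp (bot_le : ⊥ ≤ e.symm ⟨⊥, hS⟩))

def toSupBotHomOfSupClosed [OrderBot L] [OrderBot β] (e : L ≃o S) (hS : SupClosed S)
    (hbot : ⊥ ∈ S) : SupBotHom L β where
  toFun x := e x
  map_sup' := e.val_map_sup_of_supClosed hS
  map_bot' := e.val_map_bot_of_bot_mem hbot

theorem injective_toSupBotHomOfSupClosed [OrderBot L] [OrderBot β] (e : L ≃o S)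
    (hS : SupClosed S) (hbot : ⊥ ∈ S) : Function.Injective (e.toSupBotHomOfSupClosed hS hbot) :=
  Subtype.val_injective.comp e.injective

end OrderIso

section FiniteLattice

variable {L α : Type*} [CompleteLattice L] [Finite L] [DecidableEq α]

theorem InfIrred.lt_sInf_setOf_lt {k : L} (hk : InfIrred k) : k < sInf {x | k < x} := by
  refine (le_sInf fun _ hx => hx.le).lt_of_ne fun h => ?_
  have hfin := Set.toFinite {x | k < x}
  rw [← hfin.coe_toFinset, ← Finset.inf_id_eq_sInf] at h
  obtain ⟨x, hx, rfl⟩ := hk.finset_inf_eq h.symm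
  exact lt_irrefl x (hfin.mem_toFinset.mp hx)

namespace SupBotHom

variable (F : SupBotHom L (Finset α))

theorem notMem_sSup_setOf_notMem (i : α) : i ∉ F (sSup {x | i ∉ F x}) := by
  have hfin := Set.toFinite {x | i ∉ F x}
  rw [← hfin.coe_toFinset, ← Finset.sup_id_eq_sSup, map_finset_sup, Finset.mem_sup]
  rintro ⟨x, hx, hix⟩
  exact hfin.mem_toFinset.mp hx hix

theorem setOf_infIrred_subset_range (hF : Function.Injective F) :
    {k : L | InfIrred k} ⊆ Set.range fun i => sSup {x | i ∉ F x} := by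
  intro k hk
  set c := sInf {x | k < x}
  have hkc : F k ⊂ F c := (OrderHomClass.mono F).strictMono_of_injective hF hk.lt_sInf_setOf_lt
  obtain ⟨i, hic, hik⟩ := Finset.exists_of_ssubset hkc
  refine ⟨i, ((le_sSup hik).lt_or_eq.resolve_left fun hlt => ?_).symm⟩
  exact F.notMem_sSup_setOf_notMem i (OrderHomClass.mono F (sInf_le hlt) hic)

theorem ncard_setOf_infIrred_le [Finite α] (hF : Function.Injective F) :
    {k : L | InfIrred k}.ncard ≤ Nat.card α := by
  calc {k : L | InfIrred k}.ncard
      ≤ (Set.range fun i => sSup {x | i ∉ F x}).ncard :=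
        Set.ncard_le_ncard (F.setOf_infIrred_subset_range hF)
    _ ≤ (Set.univ : Set α).ncard := by
        rw [← Set.image_univ]
        exact Set.ncard_image_le
    _ = Nat.card α := Set.ncard_univ α

end SupBotHom

end FiniteLattice

theorem stmt4_general {L : Type*} [CompleteLattice L] [Fintype L]
    {n r : ℕ} (g : Fin r → Finset (Fin n)) (e : L ≃o ↥(lcmLat g)) :
    (MeetIrred L).ncard ≤ n := by
  let F := e.toSupBotHomOfSupClosed (supClosed_lcmLat g) (bot_mem_lcmLat g)
  calc (MeetIrred L).ncard
      ≤ {k : L | InfIrred k}.ncard := Set.ncard_le_ncard meetIrred_subset_setOf_infIrred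
    _ ≤ Nat.card (Fin n) := F.ncard_setOf_infIrred_le (e.injective_toSupBotHomOfSupClosed _ _)
    _ = n := Nat.card_fin n

/-- If a squarefree monomial ideal in `n` variables has lcm-lattice isomorphic
to the finite atomic lattice `L̂`, then `n ≥ #mi(L)`. -/
theorem stmt4 {L : Type*} [CompleteLattice L] [Fintype L] [IsAtomistic L]
    {n r : ℕ} (g : Fin r → Finset (Fin n)) (e : L ≃o ↥(lcmLat g)) :
    (MeetIrred L).ncard ≤ n :=
  stmt4_general g e
end

section
/- Let L̂ be a finite atomic lattice realized as the lcm-lattice of a squarefree monomial ideal I, let (k, l) be an essential pair of L̂ (k meet-irreducible, l its unique cover). Then a variable y_i separates (k, l) if and only if L(y_i,1) = { b : ¬(b ≤ k) }, i.e., the maximum element of L(y_i,0) equals k. Moreover some variable separates every essential pair. -/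
/-- An essential pair `(k, l)`: `k` is meet-irreducible and `l` is its unique cover. -/
def EssPair {L : Type*} [Lattice L] [BoundedOrder L] (k l : L) : Prop :=
  k ∈ MeetIrred L ∧ k ⋖ l ∧ ∀ m : L, k ⋖ m → m = l

/-- `lcmLat` is closed under unions, and the order iso sends joins to unions. -/
lemma lcmLat_apply_sup {L : Type*} [CompleteLattice L]
    {n r : ℕ} {g : Fin r → Finset (Fin n)} (e : L ≃o ↥(lcmLat g)) (a b : L) :
    ((e (a ⊔ b)) : Finset (Fin n)) = (e a).1 ∪ (e b).1 := by
  have hmem : (e a).1 ∪ (e b).1 ∈ lcmLat g := by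
    obtain ⟨Ta, hTa⟩ := (e a).2
    obtain ⟨Tb, hTb⟩ := (e b).2
    exact ⟨Ta ∪ Tb, by rw [Finset.sup_union, ← hTa, ← hTb, Finset.sup_eq_union]⟩
  set c : ↥(lcmLat g) := ⟨(e a).1 ∪ (e b).1, hmem⟩
  apply subset_antisymm
  · have ha : a ≤ e.symm c := e.le_symm_apply.mpr (by
      show (e a).1 ⊆ _; exact Finset.subset_union_left)
    have hb : b ≤ e.symm c := e.le_symm_apply.mpr (by
      show (e b).1 ⊆ _; exact Finset.subset_union_right)
    have : e (a ⊔ b) ≤ c := by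
      rw [← e.apply_symm_apply c]
      exact e.monotone (sup_le ha hb)
    exact this
  · apply Finset.union_subset
    · exact e.monotone le_sup_left
    · exact e.monotone le_sup_right

/-- Let `(k, l)` be an essential pair of `L̂ ≅ LCM(I)`.  A variable `y_i`
separates `(k, l)` (i.e. `y_i ∣ y(l)` and `y_i ∤ y(k)`) iff
`L(y_i,1) = {b | ¬ b ≤ k}`, equivalently the maximum of `L(y_i,0)` is `k`.
Moreover some variable separates every essential pair. -/
theorem stmt6 {L : Type*} [CompleteLattice L] [Fintype L] [IsAtomistic L]
    {n r : ℕ} (g : Fin r → Finset (Fin n)) (e : L ≃o ↥(lcmLat g))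
    (k l : L) (h : EssPair k l) :
    (∀ i : Fin n,
      (i ∈ (e l).1 ∧ i ∉ (e k).1) ↔ {b : L | i ∈ (e b).1} = {b : L | ¬ b ≤ k}) ∧
    (∀ i : Fin n,
      (i ∈ (e l).1 ∧ i ∉ (e k).1) ↔ IsGreatest {b : L | i ∉ (e b).1} k) ∧
    ∃ i : Fin n, i ∈ (e l).1 ∧ i ∉ (e k).1 := by
  obtain ⟨-, hkl, huniq⟩ := h
  have hklt : k < l := hkl.lt
  -- any element strictly above k is above l
  have hle : ∀ m : L, k < m → l ≤ m := by
    intro m hm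
    obtain ⟨x, hx, hxm⟩ := exists_covBy_le_of_lt hm
    rw [← huniq x hx]
    exact hxm
  -- the separation condition implies the set equality
  have main : ∀ i : Fin n, (i ∈ (e l).1 ∧ i ∉ (e k).1) →
      ∀ b : L, i ∈ (e b).1 ↔ ¬ b ≤ k := by
    intro i ⟨hil, hik⟩ b
    constructor
    · intro hib hbk
      exact hik (e.monotone hbk hib)
    · intro hbk
      by_contra hib
      have hlt : k < b ⊔ k := lt_of_le_of_ne le_sup_right
        (fun hEq => hbk (le_of_sup_eq (by rw [← hEq])))
      have : i ∈ (e (b ⊔ k)).1 := e.monotone (hle _ hlt) hil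
      rw [lcmLat_apply_sup e b k] at this
      rcases Finset.mem_union.mp this with h1 | h2
      · exact hib h1
      · exact hik h2
  refine ⟨?_, ?_, ?_⟩
  · intro i
    constructor
    · intro hi
      ext b
      exact main i hi b
    · intro hset
      have hl : ¬ l ≤ k := not_le_of_gt hklt
      have h1 : i ∈ (e l).1 := by
        have : l ∈ {b : L | i ∈ (e b).1} := by rw [hset]; exact hl
        exact this
      have h2 : i ∉ (e k).1 := by
        intro hik
        have : k ∈ {b : L | ¬ b ≤ k} := by rw [← hset]; exact hik
        exact this le_rfl
      exact ⟨h1, h2⟩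
  · intro i
    constructor
    · intro hi
      refine ⟨hi.2, fun b hb => ?_⟩
      by_contra hbk
      exact hb ((main i hi b).mpr hbk)
    · intro ⟨hik, hmax⟩
      refine ⟨?_, hik⟩
      by_contra hil
      exact not_le_of_gt hklt (hmax hil)
  · -- existence: e k ⊊ e l as finsets
    have hlt' : (e k) < (e l) := e.strictMono hklt
    have hss : (e k).1 ⊂ (e l).1 := by
      rw [Finset.ssubset_iff_subset_ne]
      refine ⟨hlt'.le, fun hEq => ?_⟩
      exact hlt'.ne (Subtype.ext hEq)
    obtain ⟨i, hil, hik⟩ := Finset.exists_of_ssubset hss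
    exact ⟨i, hil, hik⟩
end

section
/- Let L̂ be a finite atomic lattice, mi(L) its set of meet-irreducible proper elements, and J(mi(L)) the distributive lattice of order filters of mi(L) ordered by reverse inclusion. Then the map sending a ∈ L̂ − {0̂} to the order filter ↑a ∩ mi(L) (equivalently, the filter of mi(L) generated by { k ∈ mi(L) : a ≤ k }) is an injective join-preserving map from L − {0̂} ∪ {1̂} into J(mi(L)). Hence L̂ − {0̂} embeds as a join subsemilattice of a distributive lattice whose meet-irreducibles are mi(L). -/
/-- The map `a ↦ ↑a ∩ mi(L)` from `L̂` to the distributive lattice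
`J(mi(L))` of order filters of `mi(L)` ordered by reverse inclusion
(in Mathlib, `UpperSet` is ordered by reverse inclusion). -/
def phiJ {L : Type*} [Lattice L] [BoundedOrder L] (a : L) :
    UpperSet ↥(MeetIrred L) :=
  ⟨{l | a ≤ ↑l}, fun _ _ huv hu => le_trans hu huv⟩

section

variable {L : Type*} [Lattice L] [BoundedOrder L]

theorem InfIrred.mem_meetIrred {l : L} (hl : InfIrred l) (hl_ne_bot : l ≠ ⊥) :
    l ∈ MeetIrred L :=
  ⟨hl_ne_bot, hl.ne_top, fun _ _ hab => (hl.2 hab.symm).imp Eq.symm Eq.symm⟩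

theorem phiJ_sup (a b : L) : phiJ (a ⊔ b) = phiJ a ⊔ phiJ b :=
  UpperSet.ext <| Set.ext fun _ => sup_le_iff

/-- `b` is a finite meet of inf-irreducibles; these lie above `b ≠ ⊥`, so they are proper. -/
theorem le_of_forall_meetIrred_le [WellFoundedGT L] {a b : L} (hb : b ≠ ⊥)
    (h : ∀ m ∈ MeetIrred L, b ≤ m → a ≤ m) : a ≤ b := by
  obtain ⟨s, rfl, hs⟩ := exists_infIrred_decomposition b
  refine Finset.le_inf fun m hm => h m ((hs hm).mem_meetIrred ?_) (Finset.inf_le hm)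
  exact ne_bot_of_le_ne_bot hb (Finset.inf_le hm)

theorem phiJ_le_phiJ_iff [WellFoundedGT L] {a b : L} (hb : b ≠ ⊥) :
    phiJ a ≤ phiJ b ↔ a ≤ b := by
  refine ⟨fun h => le_of_forall_meetIrred_le hb fun m hm hbm => ?_,
    fun hab m hbm => hab.trans hbm⟩
  exact h (show (⟨m, hm⟩ : ↥(MeetIrred L)) ∈ phiJ b from hbm)

theorem phiJ_injOn [WellFoundedGT L] : Set.InjOn (phiJ (L := L)) {a : L | a ≠ ⊥} :=
  fun _ ha _ hb hab =>
    le_antisymm ((phiJ_le_phiJ_iff hb).1 hab.le) ((phiJ_le_phiJ_iff ha).1 hab.ge)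

end

theorem stmt9_general {L : Type*} [CompleteLattice L] [Fintype L] :
    Set.InjOn (phiJ (L := L)) {a : L | a ≠ ⊥} ∧
    (∀ a b : L, phiJ (a ⊔ b) = phiJ a ⊔ phiJ b) :=
  ⟨phiJ_injOn, phiJ_sup⟩

/-- `a ↦ ↑a ∩ mi(L)` is an injective join-preserving map from `L̂ − {0̂}` into
the distributive lattice `J(mi(L))` of order filters of `mi(L)` under reverse
inclusion; hence `L̂ − {0̂}` embeds as a join subsemilattice of a distributive
lattice whose meet-irreducibles form `mi(L)`. -/
theorem stmt9 {L : Type*} [CompleteLattice L] [Fintype L] [IsAtomistic L] :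
    Set.InjOn (phiJ (L := L)) {a : L | a ≠ ⊥} ∧
    (∀ a b : L, phiJ (a ⊔ b) = phiJ a ⊔ phiJ b) :=
  stmt9_general
end

section
/- The 4-element poset N with elements {p, q, r, s}, relations p < r, q < r, q < s, and no other relations, is not isomorphic to the poset of meet-irreducible proper elements of any finite atomic lattice. -/
/-- The order relation of the 4-element poset `N` on `{p,q,r,s} = {0,1,2,3}`:
`p < r`, `q < r`, `q < s`, and no other strict relations. -/
def Nrel (x y : Fin 4) : Prop :=
  x = y ∨ (x = 0 ∧ y = 2) ∨ (x = 1 ∧ y = 2) ∨ (x = 1 ∧ y = 3)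

theorem le_of_forall_infIrred_le {α : Type*} [SemilatticeInf α] [OrderTop α] [WellFoundedGT α]
    {a b : α} (h : ∀ m, InfIrred m → a ≤ m → b ≤ m) : b ≤ a := by
  obtain ⟨s, rfl, hs⟩ := exists_infIrred_decomposition a
  exact Finset.le_inf fun m hm => h m (hs hm) (Finset.inf_le hm)

theorem InfIrred.mem_meetIrred_s10 {L : Type*} [Lattice L] [BoundedOrder L] {m : L}
    (hm : InfIrred m) (hbot : m ≠ ⊥) : m ∈ MeetIrred L :=
  ⟨hbot, hm.ne_top, fun _ _ h => (hm.2 h.symm).imp Eq.symm Eq.symm⟩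

theorem isAtom_of_forall_meetIrred_not_le {L : Type*} [CompleteLattice L] [WellFoundedGT L]
    [IsAtomistic L] {m y : L} (hmy : ¬ m ≤ y)
    (huniq : ∀ n ∈ MeetIrred L, ¬ n ≤ y → n = m) : IsAtom m := by
  obtain ⟨a, ha, ham, hay⟩ : ∃ a, IsAtom a ∧ a ≤ m ∧ ¬ a ≤ y := by
    simpa [le_iff_atom_le_imp (a := m)] using hmy
  have hma : m ≤ a := le_of_forall_infIrred_le fun n hn han =>
    (huniq n (hn.mem_meetIrred_s10 (ha.ne_bot ∘ le_bot_iff.1 ∘ (· ▸ han)))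
      fun hny => hay (han.trans hny)).ge
  exact le_antisymm ham hma ▸ ha

theorem not_nrel_two_iff {i : Fin 4} : ¬ Nrel i 2 ↔ i = 3 := by
  fin_cases i <;> simp [Nrel]

/-- The poset `N` is not isomorphic to the poset of meet-irreducible proper
elements of any finite atomic lattice. -/
theorem stmt10 {L : Type*} [CompleteLattice L] [Fintype L] [IsAtomistic L] :
    ¬ ∃ f : ↥(MeetIrred L) → Fin 4, Function.Bijective f ∧
        ∀ x y : ↥(MeetIrred L), x ≤ y ↔ Nrel (f x) (f y) := by
  rintro ⟨f, ⟨finj, fsurj⟩, hf⟩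
  obtain ⟨Q, hQ⟩ := fsurj 1
  obtain ⟨R, hR⟩ := fsurj 2
  obtain ⟨S, hS⟩ := fsurj 3
  have hSR : ¬ S ≤ R := by simp [hf, hS, hR, Nrel]
  have hQS : Q < S := by simp [lt_iff_le_not_ge, hf, hS, hQ, Nrel]
  have huniq : ∀ n ∈ MeetIrred L, ¬ n ≤ R → n = S := fun n hn hnR => by
    have hfn : ¬ (⟨n, hn⟩ : MeetIrred L) ≤ R := hnR
    rw [hf, hR, not_nrel_two_iff, ← hS] at hfn
    exact congrArg Subtype.val (finj hfn)
  exact Q.2.1 ((isAtom_of_forall_meetIrred_not_le hSR huniq).2 Q hQS)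
end

section
/- Dilworth's theorem: every finite poset P can be partitioned into w chains, where w is the maximum cardinality of an antichain in P. -/
/-!
Galvin's induction. Remove a maximal element `m` of `s` and partition the rest into
`k = width (s \ {m})` chains. Every maximum antichain then meets each of these `k` chains, and
in each chain the topmost point lying on some maximum antichain gives a maximum antichain `T`.
If no point of `T` lies below `m`, then `T ∪ {m}` is an antichain and `{m}` is a new chain.
Otherwise `m` together with the part of the chain of some `y ∈ T` below `y` is a chain `K`
meeting every maximum antichain of `s \ {m}`, so `s \ K` has width below `k` and induction
applies to it.
-/

section Dilworth

open Finset

variable {α : Type*} [PartialOrder α]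

namespace Finset

lemma exists_isGreatest_of_isChain {s : Finset α} (hs : IsChain (· ≤ ·) (s : Set α))
    (hne : s.Nonempty) : ∃ y, IsGreatest (s : Set α) y := by
  obtain ⟨y, hy⟩ := s.exists_maximal hne
  refine ⟨y, hy.1, fun x hx => ?_⟩
  obtain rfl | hxy := eq_or_ne x y
  · exact le_rfl
  · exact (hs hx hy.1 hxy).elim id (hy.2 hx)

open Classical in
noncomputable def width (s : Finset α) : ℕ :=
  (s.powerset.filter fun t : Finset α => IsAntichain (· ≤ ·) (t : Set α)).sup card

/-- Maximum in cardinality, unlike Mathlib's `IsMaxAntichain` (maximal under inclusion). -/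
def IsMaximumAntichain (s t : Finset α) : Prop :=
  t ⊆ s ∧ IsAntichain (· ≤ ·) (t : Set α) ∧ #t = s.width

lemma card_le_width {s t : Finset α} (hts : t ⊆ s) (ht : IsAntichain (· ≤ ·) (t : Set α)) :
    #t ≤ s.width := by
  classical
  exact le_sup (f := card) (mem_filter.2 ⟨mem_powerset.2 hts, ht⟩)

lemma exists_isMaximumAntichain (s : Finset α) : ∃ t, IsMaximumAntichain s t := by
  classical
  obtain ⟨t, ht, hcard⟩ := exists_mem_eq_sup
    (s.powerset.filter fun t : Finset α => IsAntichain (· ≤ ·) (t : Set α))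
    ⟨∅, mem_filter.2 ⟨empty_mem_powerset s, by simp⟩⟩ card
  rw [mem_filter, mem_powerset] at ht
  exact ⟨t, ht.1, ht.2, hcard.symm⟩

lemma width_mono {s u : Finset α} (h : u ⊆ s) : u.width ≤ s.width := by
  obtain ⟨t, htu, ht, hcard⟩ := exists_isMaximumAntichain u
  exact hcard ▸ card_le_width (htu.trans h) ht

lemma width_sdiff_singleton_lt [DecidableEq α] {s T : Finset α} {m : α}
    (hm : Maximal (· ∈ s) m) (hT : (s \ {m}).IsMaximumAntichain T)
    (hTm : ∀ y ∈ T, ¬y ≤ m) :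
    (s \ {m}).width < s.width := by
  have hmT : m ∉ T := fun h => (mem_sdiff.1 (hT.1 h)).2 (mem_singleton_self m)
  have hA : IsAntichain (· ≤ ·) ((insert m T : Finset α) : Set α) := by
    rw [coe_insert]
    exact hT.2.1.insert (fun y hy _ => hTm y hy)
      (fun y hy _ hmy => hTm y hy (hm.2 (mem_sdiff.1 (hT.1 hy)).1 hmy))
  calc (s \ {m}).width = #T := hT.2.2.symm
    _ < #(insert m T) := by rw [card_insert_of_notMem hmT]; omega
    _ ≤ s.width := card_le_width (insert_subset hm.1 (hT.1.trans sdiff_subset)) hA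

end Finset

namespace Finpartition

variable [DecidableEq α] {s : Finset α} (p : Finpartition s)

lemma injOn_part_of_isAntichain (hp : ∀ c ∈ p.parts, IsChain (· ≤ ·) (c : Set α))
    {t : Finset α} (hts : t ⊆ s) (ht : IsAntichain (· ≤ ·) (t : Set α)) :
    Set.InjOn p.part t := fun _ hx _ hy hxy =>
  inter_subsingleton_of_isChain_of_isAntichain (hp _ (p.part_mem.2 (hts hx))) ht
    ⟨p.mem_part_self.2 (hts hx), hx⟩ ⟨hxy ▸ p.mem_part_self.2 (hts hy), hy⟩

lemma width_le_card_parts (hp : ∀ c ∈ p.parts, IsChain (· ≤ ·) (c : Set α)) :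
    s.width ≤ #p.parts := by
  obtain ⟨t, hts, ht, hcard⟩ := s.exists_isMaximumAntichain
  exact hcard ▸ card_le_card_of_injOn p.part (fun x hx => p.part_mem.2 (hts hx))
    (p.injOn_part_of_isAntichain hp hts ht)

lemma exists_mem_of_isMaximumAntichain (hp : ∀ c ∈ p.parts, IsChain (· ≤ ·) (c : Set α))
    (hpw : #p.parts ≤ s.width) {t c : Finset α} (ht : s.IsMaximumAntichain t)
    (hc : c ∈ p.parts) : ∃ x ∈ t, x ∈ c := by
  obtain ⟨x, hx, rfl⟩ := surjOn_of_injOn_of_card_le p.part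
    (fun x hx => p.part_mem.2 (ht.1 hx)) (p.injOn_part_of_isAntichain hp ht.1 ht.2.1)
    (hpw.trans ht.2.2.ge) hc
  exact ⟨x, hx, p.mem_part_self.2 (ht.1 hx)⟩

lemma exists_isMaximumAntichain_forall_le (hp : ∀ c ∈ p.parts, IsChain (· ≤ ·) (c : Set α))
    (hpw : #p.parts ≤ s.width) :
    ∃ T, s.IsMaximumAntichain T ∧
      ∀ t, s.IsMaximumAntichain t → ∀ x ∈ t, ∀ y ∈ T, x ∈ p.part y → x ≤ y := by
  classical
  set M := {x ∈ s | ∃ t, s.IsMaximumAntichain t ∧ x ∈ t}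
  have mem_M {t x} (ht : s.IsMaximumAntichain t) (hx : x ∈ t) : x ∈ M :=
    mem_filter.2 ⟨ht.1 hx, t, ht, hx⟩
  set T := {y ∈ M | ∀ x ∈ M, x ∈ p.part y → x ≤ y}
  have hTs : T ⊆ s := fun y hy => (mem_filter.1 (mem_filter.1 hy).1).1
  have hmeet : ∀ c ∈ p.parts, ∃ y ∈ T, p.part y = c := by
    intro c hc
    obtain ⟨t, ht⟩ := s.exists_isMaximumAntichain
    obtain ⟨x, hxt, hxc⟩ := p.exists_mem_of_isMaximumAntichain hp hpw ht hc
    obtain ⟨y, hy, hytop⟩ := exists_isGreatest_of_isChain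
      ((hp c hc).mono (coe_subset.2 (filter_subset _ _)))
      ⟨x, mem_filter.2 ⟨hxc, mem_M ht hxt⟩⟩
    obtain ⟨hyc, hyM⟩ := mem_filter.1 hy
    have hpy : p.part y = c := p.part_eq_of_mem hc hyc
    refine ⟨y, mem_filter.2 ⟨hyM, fun x hx hxy => hytop ?_⟩, hpy⟩
    exact mem_filter.2 ⟨hpy ▸ hxy, hx⟩
  have hT : IsAntichain (· ≤ ·) (T : Set α) := by
    intro y₁ hy₁ y₂ hy₂ hne hle
    obtain ⟨hy₁M, hy₁top⟩ := mem_filter.1 hy₁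
    obtain ⟨hy₂M, -⟩ := mem_filter.1 hy₂
    obtain ⟨t, ht, hy₂t⟩ := (mem_filter.1 hy₂M).2
    -- `t` meets the chain of `y₁` at a point below `y₁ ≤ y₂`, which must then be `y₂`
    obtain ⟨x, hxt, hxy₁⟩ := p.exists_mem_of_isMaximumAntichain hp hpw ht
      (p.part_mem.2 (hTs hy₁))
    have hxy₂ : x = y₂ := by
      by_contra hxy₂
      exact ht.2.1 hxt hy₂t hxy₂ ((hy₁top x (mem_M ht hxt) hxy₁).trans hle)
    exact hne (le_antisymm hle (hy₁top y₂ hy₂M (hxy₂ ▸ hxy₁)))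
  refine ⟨T, ⟨hTs, hT, le_antisymm (card_le_width hTs hT) ?_⟩,
    fun t ht x hxt y hy hxy => (mem_filter.1 hy).2 x (mem_M ht hxt) hxy⟩
  exact (p.width_le_card_parts hp).trans (card_le_card_of_surjOn p.part hmeet)

lemma width_lt_of_forall_not_le (hp : ∀ c ∈ p.parts, IsChain (· ≤ ·) (c : Set α))
    (hpw : #p.parts ≤ s.width) {y : α} (hys : y ∈ s)
    (hy : ∀ t, s.IsMaximumAntichain t → ∀ x ∈ t, x ∈ p.part y → x ≤ y)
    {u : Finset α} (hus : u ⊆ s) (hu : ∀ x ∈ u, x ∈ p.part y → ¬x ≤ y) :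
    u.width < s.width := by
  by_contra! hsu
  obtain ⟨t, htu, ht, hcard⟩ := u.exists_isMaximumAntichain
  have hts : s.IsMaximumAntichain t :=
    ⟨htu.trans hus, ht, le_antisymm (card_le_width (htu.trans hus) ht) (hcard ▸ hsu)⟩
  obtain ⟨x, hxt, hxy⟩ := p.exists_mem_of_isMaximumAntichain hp hpw hts (p.part_mem.2 hys)
  exact hu x (htu hxt) hxy (hy t hts x hxt hxy)

lemma exists_extend_of_isChain {s c : Finset α} (hcs : c ⊆ s) (hc : c.Nonempty)
    (hchain : IsChain (· ≤ ·) (c : Set α)) (p : Finpartition (s \ c))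
    (hp : ∀ d ∈ p.parts, IsChain (· ≤ ·) (d : Set α)) :
    ∃ q : Finpartition s, (∀ d ∈ q.parts, IsChain (· ≤ ·) (d : Set α)) ∧
      #q.parts = #p.parts + 1 :=
  ⟨p.extend hc.ne_empty disjoint_sdiff_self_left (sdiff_union_of_subset hcs),
    fun d hd => (mem_insert.1 hd).elim (fun h => h ▸ hchain) (hp d), p.card_extend _ _⟩

end Finpartition

theorem Finset.exists_chain_finpartition_card_le_width [DecidableEq α] (s : Finset α) :
    ∃ p : Finpartition s, (∀ c ∈ p.parts, IsChain (· ≤ ·) (c : Set α)) ∧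
      #p.parts ≤ s.width := by
  classical
  induction s using Finset.strongInduction with
  | H s ih =>
  obtain rfl | hs := s.eq_empty_or_nonempty
  · exact ⟨Finpartition.empty _, by simp, by simp⟩
  obtain ⟨m, hm⟩ := s.exists_maximal hs
  have hms : {m} ⊆ s := singleton_subset_iff.2 hm.1
  obtain ⟨p, hp, hpw⟩ := ih (s \ {m}) (sdiff_ssubset hms (singleton_nonempty m))
  obtain ⟨T, hT, hTtop⟩ := p.exists_isMaximumAntichain_forall_le hp hpw
  by_cases hTm : ∃ y ∈ T, y ≤ m
  · obtain ⟨y, hyT, hym⟩ := hTm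
    set K := insert m ((p.part y).filter (· ≤ y))
    have hKs : K ⊆ s :=
      insert_subset hm.1 ((filter_subset _ _).trans ((p.part_subset y).trans sdiff_subset))
    have hK : IsChain (· ≤ ·) (K : Set α) := by
      rw [coe_insert]
      exact ((hp _ (p.part_mem.2 (hT.1 hyT))).mono (coe_subset.2 (filter_subset _ _))).insert
        fun x hx _ => Or.inr ((mem_filter.1 hx).2.trans hym)
    have hKw : (s \ K).width < (s \ {m}).width :=
      p.width_lt_of_forall_not_le hp hpw (hT.1 hyT) (fun t ht x hxt => hTtop t ht x hxt y hyT)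
        (sdiff_subset_sdiff subset_rfl (singleton_subset_iff.2 (mem_insert_self _ _)))
        fun x hx hxy hle => (mem_sdiff.1 hx).2 (mem_insert_of_mem (mem_filter.2 ⟨hxy, hle⟩))
    obtain ⟨q, hq, hqw⟩ := ih (s \ K) (sdiff_ssubset hKs (insert_nonempty _ _))
    obtain ⟨r, hr, hrq⟩ :=
      Finpartition.exists_extend_of_isChain hKs (insert_nonempty _ _) hK q hq
    have := width_mono (sdiff_subset : s \ {m} ⊆ s)
    exact ⟨r, hr, by omega⟩
  · push Not at hTm
    obtain ⟨r, hr, hrp⟩ := Finpartition.exists_extend_of_isChain hms (singleton_nonempty m)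
      (by simp) p hp
    have := width_sdiff_singleton_lt hm hT hTm
    exact ⟨r, hr, by omega⟩

end Dilworth

/-- Dilworth's theorem: a finite poset `P` can be partitioned into `w` chains,
where `w` is the maximum cardinality of an antichain in `P`. -/
theorem stmt13 {P : Type*} [PartialOrder P] [Fintype P] [DecidableEq P] (w : ℕ)
    (hw : IsGreatest
      {c : ℕ | ∃ A : Finset P, IsAntichain (· ≤ ·) (A : Set P) ∧ A.card = c} w) :
    ∃ C : Finset (Finset P), C.card = w ∧
      (∀ c ∈ C, IsChain (· ≤ ·) (c : Set P)) ∧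
      ∀ x : P, ∃! c : Finset P, c ∈ C ∧ x ∈ c := by
  obtain ⟨C, hC, hCw⟩ := (Finset.univ : Finset P).exists_chain_finpartition_card_le_width
  have hwidth : (Finset.univ : Finset P).width = w := by
    obtain ⟨t, -, ht, hcard⟩ := (Finset.univ : Finset P).exists_isMaximumAntichain
    obtain ⟨A, hA, rfl⟩ := hw.1
    exact le_antisymm (hcard ▸ hw.2 ⟨t, ht, rfl⟩)
      (Finset.card_le_width (Finset.subset_univ A) hA)
  exact ⟨C.parts, hwidth ▸ le_antisymm hCw (C.width_le_card_parts hC), hC,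
    fun x => C.existsUnique_mem (Finset.mem_univ x)⟩
end

section
/- Let L̂ be a finite atomic lattice, M(L) its minimal squarefree ideal, and for incomparable k', k ∈ mi(L) let M̄ be the image of M(L) in k[L]/(x_{k'} − x_k). Then LCM(M̄) ≇ L̂. Conversely, if k' and k are comparable then LCM(M̄) ≅ L̂. -/
open scoped Classical

noncomputable section

/-- The exponent vector of the image of the generator `x(a)` of `M(L)` after
identifying the variable `x_{k₁}` with `x_{k₀}` (i.e. in `k[L]/(x_{k₁} − x_{k₀})`):
the variable `x_{k₀}` acquires the sum of the old exponents at `k₀` and `k₁`,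
the variable `x_{k₁}` is no longer used, and all other exponents are unchanged. -/
def mergeExpo {L : Type*} [CompleteLattice L] [Fintype L]
    (k₀ k₁ : ↥(MeetIrred L)) (a : L) : ↥(MeetIrred L) → ℕ := fun l =>
  if l = k₁ then 0
  else if l = k₀ then
    (if a ≤ (k₀ : L) then 0 else 1) + (if a ≤ (k₁ : L) then 0 else 1)
  else if a ≤ (l : L) then 0 else 1

open Finset

/-!
If `k₀` and `k₁` are comparable, `mergeExpo k₀ k₁` still turns joins into pointwise maxima (the
exponent of `x_{k₀}` counts how many of the two nested elements `x` is not below), and it still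
separates points because every element of `L̂` is a meet of meet-irreducibles; so it is an order
embedding of `L̂` onto the lcm-lattice.

If they are incomparable, an isomorphism `θ` sends each meet-irreducible `k` to the greatest
element of the lcm-lattice whose exponent at some variable `x_l` stays below its value at the cover
of `k`. For the merged generators these greatest elements are the joins over the atoms below `l`
(`l ≠ k₀, k₁`), below `k₀ ⊓ k₁` (no `x_{k₀}` at all), and below `k₀` or `k₁` (no `x_{k₀}²`).
There are only `|mi(L)|` of them, so `θ` maps `mi(L)` onto them and both families have equally many
comparable pairs. But replacing the atom sets of `k₀` and `k₁` by their intersection and union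
strictly increases the number of comparable pairs.
-/

section FinsetSupSet

variable {α ι : Type*} (p : α → Prop) (g : α → ι → ℕ)

def finsetSupSet : Set (ι → ℕ) := {w | ∃ T : Finset α, (∀ a ∈ T, p a) ∧ w = T.sup g}

def greatestApplyLT [Fintype α] (l : ι) (v : ℕ) : ι → ℕ :=
  (univ.filter fun a => p a ∧ g a l < v).sup g

variable {p g}

theorem exists_apply_eq_of_mem_finsetSupSet {w : ι → ℕ} (hw : w ∈ finsetSupSet p g) {l : ι}
    (hl : 0 < w l) : ∃ a, p a ∧ w l = g a l := by
  obtain ⟨T, hT, rfl⟩ := hw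
  rw [Finset.sup_apply] at hl ⊢
  obtain ⟨a, ha, heq⟩ := exists_mem_eq_sup T
    (nonempty_iff_ne_empty.2 fun h => by simp [h] at hl) (fun b => g b l)
  exact ⟨a, hT a ha, heq⟩

variable [Fintype α]

theorem isGreatest_greatestApplyLT {l : ι} {v : ℕ} (hv : 0 < v) :
    IsGreatest {w ∈ finsetSupSet p g | w l < v} (greatestApplyLT p g l v) := by
  refine ⟨⟨⟨_, fun a ha => (mem_filter.1 ha).2.1, rfl⟩, ?_⟩, ?_⟩
  · rw [greatestApplyLT, Finset.sup_apply, Finset.sup_lt_iff hv]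
    exact fun a ha => (mem_filter.1 ha).2.2
  · rintro _ ⟨⟨T, hT, rfl⟩, hlt⟩
    refine Finset.sup_mono fun a ha => mem_filter.2 ⟨mem_univ a, hT a ha, ?_⟩
    exact lt_of_le_of_lt (Finset.le_sup (f := fun b => g b l) ha) (by rwa [← Finset.sup_apply])

theorem le_greatestApplyLT_iff {w : ι → ℕ} (hw : w ∈ finsetSupSet p g) {l : ι} {v : ℕ}
    (hv : 0 < v) : w ≤ greatestApplyLT p g l v ↔ w l < v :=
  ⟨fun h => lt_of_le_of_lt (h l) (isGreatest_greatestApplyLT hv).1.2,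
    fun h => (isGreatest_greatestApplyLT hv).2 ⟨hw, h⟩⟩

theorem greatestApplyLT_le_greatestApplyLT_iff {l l' : ι} {v v' : ℕ} (hv : 0 < v)
    (hv' : 0 < v') : greatestApplyLT p g l v ≤ greatestApplyLT p g l' v' ↔
      {a | p a ∧ g a l < v} ⊆ {a | p a ∧ g a l' < v'} := by
  rw [le_greatestApplyLT_iff (isGreatest_greatestApplyLT hv).1.1 hv', greatestApplyLT,
    Finset.sup_apply, Finset.sup_lt_iff hv']
  simp only [mem_filter, mem_univ, true_and]
  exact ⟨fun h a ha => ⟨ha.1, h a ha⟩, fun h a ha => (h ha).2⟩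

theorem OrderIso.exists_eq_greatestApplyLT {L : Type*} [PartialOrder L]
    (θ : L ≃o finsetSupSet p g) {k c : L} (hkc : k < c) (hc : ∀ z, k < z → c ≤ z) :
    ∃ l a, p a ∧ 0 < g a l ∧ (θ k : ι → ℕ) = greatestApplyLT p g l (g a l) := by
  obtain ⟨l, hl⟩ := Pi.lt_def.1 (Subtype.coe_lt_coe.2 (θ.strictMono hkc)) |>.2
  obtain ⟨a, ha, hv⟩ := exists_apply_eq_of_mem_finsetSupSet (θ c).2 (l := l) (by omega)
  have hpos : 0 < g a l := by omega
  refine ⟨l, a, ha, hpos, ?_⟩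
  set M : finsetSupSet p g := ⟨_, (isGreatest_greatestApplyLT hpos).1.1⟩
  have hkM : θ k ≤ M := (le_greatestApplyLT_iff (θ k).2 hpos).2 (hv ▸ hl)
  have hcM : ¬ θ c ≤ M := fun h => (lt_irrefl _) (hv ▸ (le_greatestApplyLT_iff (θ c).2 hpos).1 h)
  have hk : k = θ.symm M := by
    refine (θ.le_symm_apply.2 hkM).eq_of_not_lt fun hlt => hcM ?_
    exact θ.le_symm_apply.1 (hc _ hlt)
  rw [hk, θ.apply_symm_apply]

end FinsetSupSet

section ComparablePairs

variable {P : Type*} [Fintype P]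

theorem card_le_pairs_eq_of_forall_mem_range {β : Type*} [LE β] {σ μ : P → β}
    (hσ : Function.Injective σ) (hμ : ∀ x, σ x ∈ Set.range μ) :
    #{q : P × P | σ q.1 ≤ σ q.2} = #{q : P × P | μ q.1 ≤ μ q.2} := by
  choose f hf using hμ
  have hf_bij : Function.Bijective f :=
    Finite.injective_iff_bijective.1 fun x y h => hσ (by rw [← hf, ← hf, h])
  set e := Equiv.ofBijective f hf_bij
  refine card_equiv (e.prodCongr e) fun q => ?_
  simp [e, hf]

theorem ite_le_add_ite_le_le_inf_add_sup {α : Type*} [Lattice α] (w u v : α) :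
    (if w ≤ u then 1 else 0) + (if w ≤ v then 1 else 0) ≤
      (if w ≤ u ⊓ v then 1 else 0) + (if w ≤ u ⊔ v then 1 else 0) := by
  by_cases hu : w ≤ u <;> by_cases hv : w ≤ v <;>
    simp [hu, hv, le_sup_of_le_left, le_sup_of_le_right]

theorem ite_ge_add_ite_ge_le_inf_add_sup {α : Type*} [Lattice α] (w u v : α) :
    (if u ≤ w then 1 else 0) + (if v ≤ w then 1 else 0) ≤
      (if u ⊓ v ≤ w then 1 else 0) + (if u ⊔ v ≤ w then 1 else 0) := by
  by_cases hu : u ≤ w <;> by_cases hv : v ≤ w <;>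
    simp [hu, hv, inf_le_of_left_le, inf_le_of_right_le]

theorem card_le_pairs_lt_of_inf_sup {α : Type*} [Lattice α] [DecidableEq P] (A B : P → α)
    {i j : P} (hij : ¬ A i ≤ A j) (hji : ¬ A j ≤ A i) (hBi : B i = A i ⊓ A j)
    (hBj : B j = A i ⊔ A j) (hB : ∀ x, x ≠ i → x ≠ j → B x = A x) :
    #{q : P × P | A q.1 ≤ A q.2} < #{q : P × P | B q.1 ≤ B q.2} := by
  -- Along each orbit of `ρ`, a comparison with `A i` is paired with the same one with `A j`.
  set ρ := (Equiv.swap i j).prodCongr (Equiv.swap i j)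
  let count (R : P → α) (q : P × P) : ℕ := if R q.1 ≤ R q.2 then 1 else 0
  have hcard (R : P → α) : #{q : P × P | R q.1 ≤ R q.2} = ∑ q, count R q := card_filter _ _
  have hsym (R : P → α) : ∑ q, count R (ρ q) = ∑ q, count R q := Equiv.sum_comp ρ _
  have hpair : ∀ q, count A q + count A (ρ q) ≤ count B q + count B (ρ q) := by
    have htri (x : P) : x = i ∨ x = j ∨ (x ≠ i ∧ x ≠ j) := by tauto
    rintro ⟨x, y⟩
    rcases htri x with rfl | rfl | ⟨hxi, hxj⟩ <;> rcases htri y with rfl | rfl | ⟨hyi, hyj⟩ <;>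
      simp only [count, ρ, Equiv.prodCongr_apply, Prod.map, Equiv.swap_apply_left,
        Equiv.swap_apply_right, Equiv.swap_apply_of_ne_of_ne, *, ne_eq,
        not_false_eq_true, le_refl, ite_true, ite_false, add_zero]
    all_goals first
      | exact Nat.zero_le _
      | exact ite_le_add_ite_le_le_inf_add_sup _ _ _
      | exact ite_ge_add_ite_ge_le_inf_add_sup _ _ _
      | exact (add_comm _ _).trans_le
          ((ite_le_add_ite_le_le_inf_add_sup _ _ _).trans_eq (add_comm _ _))
      | exact (add_comm _ _).trans_le
          ((ite_ge_add_ite_ge_le_inf_add_sup _ _ _).trans_eq (add_comm _ _))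
  have hstrict : count A (i, j) + count A (ρ (i, j)) < count B (i, j) + count B (ρ (i, j)) := by
    simp [count, ρ, hBi, hBj, hij, hji]
  have hsum := sum_lt_sum (s := univ) (fun q _ => hpair q) ⟨(i, j), mem_univ _, hstrict⟩
  rw [sum_add_distrib, sum_add_distrib, hsym, hsym] at hsum
  rw [hcard, hcard]
  omega

end ComparablePairs

section MeetIrred

variable {L : Type*} [Lattice L] [BoundedOrder L]

theorem infIrred_of_mem_meetIrred {k : L} (hk : k ∈ MeetIrred L) : InfIrred k :=
  ⟨fun h => hk.2.1 h.eq_top, fun _ _ h => (hk.2.2 _ _ h.symm).imp Eq.symm Eq.symm⟩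

theorem mem_meetIrred_of_infIrred {k : L} (hk : InfIrred k) (hbot : k ≠ ⊥) : k ∈ MeetIrred L :=
  ⟨hbot, hk.ne_top, fun _ _ h => (hk.2 h.symm).imp Eq.symm Eq.symm⟩

variable [Fintype L]

theorem exists_cover_of_mem_meetIrred {k : L} (hk : k ∈ MeetIrred L) :
    ∃ c, k < c ∧ ∀ z, k < z → c ≤ z := by
  refine ⟨(univ.filter (k < ·)).inf id, ?_, fun z hz => inf_le (mem_filter.2 ⟨mem_univ z, hz⟩)⟩
  refine (Finset.le_inf fun z hz => (mem_filter.1 hz).2.le).lt_of_ne fun h => ?_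
  obtain ⟨z, hz, rfl⟩ := (infIrred_of_mem_meetIrred hk).finset_inf_eq h.symm
  exact lt_irrefl _ (mem_filter.1 hz).2

theorem exists_mem_meetIrred_of_not_le_of_ne_bot {x y : L} (hy : y ≠ ⊥) (h : ¬ x ≤ y) :
    ∃ l ∈ MeetIrred L, y ≤ l ∧ ¬ x ≤ l := by
  obtain ⟨s, rfl, hs⟩ := exists_infIrred_decomposition y
  obtain ⟨l, hl, hxl⟩ : ∃ l ∈ s, ¬ x ≤ l := by simpa [Finset.le_inf_iff] using h
  have hyl : s.inf id ≤ l := inf_le hl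
  exact ⟨l, mem_meetIrred_of_infIrred (hs hl) (ne_bot_of_le_ne_bot hy hyl), hyl, hxl⟩

end MeetIrred

section Atomistic

variable {L : Type*} [CompleteLattice L] [Fintype L] [IsAtomistic L]

theorem exists_mem_meetIrred_of_not_le {x y : L} (hMI : (MeetIrred L).Nonempty) (h : ¬ x ≤ y) :
    ∃ l ∈ MeetIrred L, y ≤ l ∧ ¬ x ≤ l := by
  by_cases hy : y = ⊥
  · -- `⊥` may be inf-irreducible, so separate `x` from one of two disjoint atoms instead.
    subst hy
    obtain ⟨k, hk⟩ := hMI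
    obtain ⟨a, ha, hak⟩ := (eq_bot_or_exists_atom_le k).resolve_left hk.1
    obtain ⟨b, hb, -, hbk⟩ : ∃ b, IsAtom b ∧ b ≤ ⊤ ∧ ¬ b ≤ k := by
      simpa using (not_congr le_iff_atom_le_imp).1 fun h => hk.2.1 (top_le_iff.1 h)
    have hab : Disjoint a b := ha.disjoint_of_ne hb fun h => hbk (h ▸ hak)
    have : ¬ x ≤ a ∨ ¬ x ≤ b := by
      by_contra! hx
      exact h (hab hx.1 hx.2)
    rcases this with hxa | hxb
    · obtain ⟨l, hl, -, hxl⟩ := exists_mem_meetIrred_of_not_le_of_ne_bot ha.1 hxa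
      exact ⟨l, hl, bot_le, hxl⟩
    · obtain ⟨l, hl, -, hxl⟩ := exists_mem_meetIrred_of_not_le_of_ne_bot hb.1 hxb
      exact ⟨l, hl, bot_le, hxl⟩
  · exact exists_mem_meetIrred_of_not_le_of_ne_bot hy h

end Atomistic

section Merge

variable {L : Type*} [CompleteLattice L] [Fintype L] (k₀ k₁ : ↥(MeetIrred L))

theorem mergeExpo_mono : Monotone (mergeExpo k₀ k₁) := by
  intro x y hxy l
  simp only [mergeExpo]
  split_ifs <;> first | omega | order

theorem mergeExpo_bot : mergeExpo k₀ k₁ ⊥ = ⊥ := by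
  funext l
  simp [mergeExpo]

theorem mergeExpo_sup (hcmp : (k₀ : L) ≤ k₁ ∨ (k₁ : L) ≤ k₀) (x y : L) :
    mergeExpo k₀ k₁ (x ⊔ y) = mergeExpo k₀ k₁ x ⊔ mergeExpo k₀ k₁ y := by
  funext l
  simp only [mergeExpo, Pi.sup_apply]
  rcases hcmp with h | h <;> split_ifs <;> first | omega | order

theorem mergeExpo_finset_sup (hcmp : (k₀ : L) ≤ k₁ ∨ (k₁ : L) ≤ k₀) (T : Finset L) :
    mergeExpo k₀ k₁ (T.sup id) = T.sup (mergeExpo k₀ k₁) :=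
  apply_sup_eq_sup_comp _ (mergeExpo_sup k₀ k₁ hcmp) (mergeExpo_bot k₀ k₁)

end Merge

section MergeAtomistic

variable {L : Type*} [CompleteLattice L] [Fintype L] [IsAtomistic L] {k₀ k₁ : ↥(MeetIrred L)}

theorem le_of_mergeExpo_le_mergeExpo (hne : k₀ ≠ k₁) (hcmp : (k₀ : L) ≤ k₁ ∨ (k₁ : L) ≤ k₀)
    {x y : L} (h : mergeExpo k₀ k₁ x ≤ mergeExpo k₀ k₁ y) : x ≤ y := by
  by_contra hxy
  obtain ⟨l, hl, hyl, hxl⟩ := exists_mem_meetIrred_of_not_le ⟨_, k₀.2⟩ hxy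
  lift l to ↥(MeetIrred L) using hl
  have hk₀ := h k₀
  have hl' := h l
  simp only [mergeExpo, if_neg hne, if_true] at hk₀ hl'
  rcases eq_or_ne l k₁ with rfl | h₁
  · rcases hcmp with hc | hc <;> split_ifs at hk₀ <;> first | omega | order
  rcases eq_or_ne l k₀ with rfl | h₀
  · rcases hcmp with hc | hc <;> split_ifs at hk₀ <;> first | omega | order
  · simp [h₀, h₁, hyl, hxl] at hl'

theorem finsetSupSet_mergeExpo_eq_range (hcmp : (k₀ : L) ≤ k₁ ∨ (k₁ : L) ≤ k₀) :
    finsetSupSet IsAtom (mergeExpo k₀ k₁) = Set.range (mergeExpo k₀ k₁) := by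
  ext w
  constructor
  · rintro ⟨T, -, rfl⟩
    exact ⟨T.sup id, mergeExpo_finset_sup k₀ k₁ hcmp T⟩
  · rintro ⟨x, rfl⟩
    refine ⟨{a | IsAtom a ∧ a ≤ x}.toFinset, fun a ha => (Set.mem_toFinset.1 ha).1, ?_⟩
    rw [← mergeExpo_finset_sup k₀ k₁ hcmp, sup_id_eq_sSup, Set.coe_toFinset, sSup_atoms_le_eq]

theorem nonempty_orderIso_of_le_or_le (hne : k₀ ≠ k₁) (hcmp : (k₀ : L) ≤ k₁ ∨ (k₁ : L) ≤ k₀) :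
    Nonempty (L ≃o finsetSupSet IsAtom (mergeExpo k₀ k₁)) :=
  let e : L ↪o (↥(MeetIrred L) → ℕ) := OrderEmbedding.ofMapLEIff (mergeExpo k₀ k₁) fun _ _ =>
    ⟨le_of_mergeExpo_le_mergeExpo hne hcmp, fun h => mergeExpo_mono k₀ k₁ h⟩
  ⟨e.orderIso.trans (OrderIso.setCongr _ _ (finsetSupSet_mergeExpo_eq_range hcmp).symm)⟩

end MergeAtomistic

section Incomparable

variable {L : Type*} [CompleteLattice L] (k₀ k₁ : ↥(MeetIrred L))

def atomsBelow (x : L) : Set L := {a | IsAtom a ∧ a ≤ x}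

theorem atomsBelow_subset_atomsBelow_iff [IsAtomistic L] {x y : L} :
    atomsBelow x ⊆ atomsBelow y ↔ x ≤ y := by
  rw [le_iff_atom_le_imp (a := x)]
  exact ⟨fun h a ha hax => (h ⟨ha, hax⟩).2, fun h a ha => ⟨ha.1, h a ha.1 ha.2⟩⟩

-- The bounds `x_l < 1` (`l ≠ k₀, k₁`), `x_{k₀} < 1` and `x_{k₀} < 2` that cut out the images of
-- the meet-irreducibles; the last two are attached to `k₀` and `k₁`.
def mergedCut (m : ↥(MeetIrred L)) : ↥(MeetIrred L) × ℕ := if m = k₁ then (k₀, 2) else (m, 1)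

theorem mergedCut_snd_pos (m : ↥(MeetIrred L)) : 0 < (mergedCut k₀ k₁ m).2 := by
  unfold mergedCut
  split_ifs <;> norm_num

variable [Fintype L]

def mergedRegion (m : ↥(MeetIrred L)) : Set L :=
  {a | IsAtom a ∧ mergeExpo k₀ k₁ a (mergedCut k₀ k₁ m).1 < (mergedCut k₀ k₁ m).2}

variable {k₀ k₁}

theorem exists_mergedCut_eq (hne : k₀ ≠ k₁) {a : L} {l : ↥(MeetIrred L)}
    (h : 0 < mergeExpo k₀ k₁ a l) : ∃ m, mergedCut k₀ k₁ m = (l, mergeExpo k₀ k₁ a l) := by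
  unfold mergeExpo at h ⊢
  rcases eq_or_ne l k₁ with rfl | h₁
  · simp at h
  obtain rfl | h₀ := eq_or_ne k₀ l
  · simp only [if_neg h₁, if_true] at h ⊢
    split_ifs at h ⊢
    · omega
    · exact ⟨k₀, by simp [mergedCut, h₁]⟩
    · exact ⟨k₀, by simp [mergedCut, h₁]⟩
    · exact ⟨k₁, by simp [mergedCut]⟩
  · simp only [if_neg h₁, if_neg h₀.symm] at h ⊢
    split_ifs at h ⊢ with hal
    · omega
    · exact ⟨l, by simp [mergedCut, h₁]⟩

theorem mergedRegion_left (hne : k₀ ≠ k₁) :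
    mergedRegion k₀ k₁ k₀ = atomsBelow (k₀ : L) ∩ atomsBelow (k₁ : L) := by
  ext a
  simp only [mergedRegion, mergedCut, mergeExpo, atomsBelow, if_neg hne, if_true]
  by_cases h₀ : a ≤ (k₀ : L) <;> by_cases h₁ : a ≤ (k₁ : L) <;> simp [h₀, h₁]

theorem mergedRegion_right (hne : k₀ ≠ k₁) :
    mergedRegion k₀ k₁ k₁ = atomsBelow (k₀ : L) ∪ atomsBelow (k₁ : L) := by
  ext a
  simp only [mergedRegion, mergedCut, mergeExpo, atomsBelow, if_neg hne, if_true]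
  by_cases h₀ : a ≤ (k₀ : L) <;> by_cases h₁ : a ≤ (k₁ : L) <;> simp [h₀, h₁]

theorem mergedRegion_of_ne {m : ↥(MeetIrred L)} (h₀ : m ≠ k₀) (h₁ : m ≠ k₁) :
    mergedRegion k₀ k₁ m = atomsBelow (m : L) := by
  ext a
  simp only [mergedRegion, mergedCut, mergeExpo, atomsBelow, if_neg h₀, if_neg h₁]
  by_cases h : a ≤ (m : L) <;> simp [h]

theorem isEmpty_orderIso_of_not_le_of_not_le [IsAtomistic L] (h₀₁ : ¬ (k₀ : L) ≤ k₁)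
    (h₁₀ : ¬ (k₁ : L) ≤ k₀) : IsEmpty (L ≃o finsetSupSet IsAtom (mergeExpo k₀ k₁)) := by
  refine ⟨fun θ => ?_⟩
  have hne : k₀ ≠ k₁ := fun h => h₀₁ (h ▸ le_rfl)
  let μ (m : ↥(MeetIrred L)) : ↥(MeetIrred L) → ℕ :=
    greatestApplyLT IsAtom (mergeExpo k₀ k₁) (mergedCut k₀ k₁ m).1 (mergedCut k₀ k₁ m).2
  have hμ_le (m m' : ↥(MeetIrred L)) :
      μ m ≤ μ m' ↔ mergedRegion k₀ k₁ m ⊆ mergedRegion k₀ k₁ m' :=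
    greatestApplyLT_le_greatestApplyLT_iff (mergedCut_snd_pos k₀ k₁ m) (mergedCut_snd_pos k₀ k₁ m')
  have hθ_le (m m' : ↥(MeetIrred L)) :
      (θ m : ↥(MeetIrred L) → ℕ) ≤ θ m' ↔ atomsBelow (m : L) ⊆ atomsBelow (m' : L) := by
    rw [Subtype.coe_le_coe, θ.le_iff_le, atomsBelow_subset_atomsBelow_iff]
  have hθ_mem (k : ↥(MeetIrred L)) : (θ k : ↥(MeetIrred L) → ℕ) ∈ Set.range μ := by
    obtain ⟨c, hkc, hc⟩ := exists_cover_of_mem_meetIrred k.2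
    obtain ⟨l, a, -, hpos, heq⟩ := θ.exists_eq_greatestApplyLT hkc hc
    obtain ⟨m, hm⟩ := exists_mergedCut_eq hne hpos
    exact ⟨m, by simp only [μ, hm, heq]⟩
  have hcount := card_le_pairs_eq_of_forall_mem_range
    (fun k k' h => Subtype.ext (θ.injective (Subtype.ext h))) hθ_mem
  simp only [hθ_le, hμ_le] at hcount
  have hlt := card_le_pairs_lt_of_inf_sup (fun m : ↥(MeetIrred L) => atomsBelow (m : L))
    (mergedRegion k₀ k₁) (mt atomsBelow_subset_atomsBelow_iff.1 h₀₁)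
    (mt atomsBelow_subset_atomsBelow_iff.1 h₁₀) (mergedRegion_left hne) (mergedRegion_right hne)
    fun m h₀ h₁ => mergedRegion_of_ne h₀ h₁
  exact hlt.ne (by convert hcount)

end Incomparable

/-- Let `k₀ ≠ k₁` be meet-irreducible elements of the finite atomic lattice
`L̂` and let `M̄` be the image of `M(L)` in `k[L]/(x_{k₁} − x_{k₀})`.  Then
`LCM(M̄) ≅ L̂` if and only if `k₀` and `k₁` are comparable. -/
theorem stmt19 {L : Type*} [CompleteLattice L] [Fintype L] [IsAtomistic L]
    (k₀ k₁ : ↥(MeetIrred L)) (hne : k₀ ≠ k₁) :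
    Nonempty (L ≃o
        ↥{w : ↥(MeetIrred L) → ℕ | ∃ T : Finset L, (∀ a ∈ T, IsAtom a) ∧
          w = T.sup (mergeExpo k₀ k₁)}) ↔
      ((k₀ : L) ≤ k₁ ∨ (k₁ : L) ≤ k₀) := by
  refine ⟨fun ⟨θ⟩ => ?_, nonempty_orderIso_of_le_or_le hne⟩
  by_contra! h
  exact (isEmpty_orderIso_of_not_le_of_not_le h.1 h.2).false θ

end
end
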